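/- arXiv:math/0401022 — 2 statements merged into one kernel-verified Lean document; each statement's English description precedes it below -/
import Mathlib

section
/- Fix N ≥ 1. Place 2N vortices on the equator of the unit sphere at xⱼ = (cos(jπ/N), sin(jπ/N), 0) with alternating vorticities λⱼ = (−1)^j, for j = 1, …, 2N. Then this configuration is an equilibrium of the spherical vortex system: Fⱼ(x) = Σ_{k≠j} λ_k (x_k × xⱼ)/(1 − ⟨xⱼ, x_k⟩) = 0 for every j. -/
/-!
The reflection `k ↦ 2j - k (mod 2N)` of the ring across the line through the `j`-th vortex fixes
that vortex, preserves the vorticities (since `2N` is even) and the inner products with `x j`, and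
reverses the cross products `x k × x j`. It therefore pairs every term of `F_j` with its opposite,
so `F_j = 0`.
-/

noncomputable section

/-- Euclidean 3-space. -/
abbrev E3 := EuclideanSpace ℝ (Fin 3)

/-- The cross product in `ℝ³`. -/
def cross (u v : E3) : E3 :=
  WithLp.toLp 2 ![u 1 * v 2 - u 2 * v 1, u 2 * v 0 - u 0 * v 2, u 0 * v 1 - u 1 * v 0]

/-- The vortex vector field on the sphere:
`F i x = ∑_{j ≠ i} λ j • (x j × x i) / (1 - ⟨x i, x j⟩)`. -/
def vortexF {ι : Type*} [Fintype ι] [DecidableEq ι] (lam : ι → ℝ) (x : ι → E3) (i : ι) : E3 :=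
  ∑ j ∈ Finset.univ.erase i, (lam j / (1 - (inner ℝ (x i) (x j) : ℝ))) • cross (x j) (x i)

/-- The Hamiltonian of the point-vortex system on the sphere:
`H x = ∑_{i<j} λ i * λ j * ln (‖x i - x j‖² / 2)`. -/
def sphereH {N : ℕ} (lam : Fin N → ℝ) (x : Fin N → E3) : ℝ :=
  ∑ i, ∑ j, if i < j then lam i * lam j * Real.log (‖x i - x j‖ ^ 2 / 2) else 0

open Real

theorem Finset.sum_eq_zero_of_perm_neg {ι M : Type*} [AddCommGroup M] [IsAddTorsionFree M]
    (σ : Equiv.Perm ι) (s : Finset ι) (f : ι → M) (hs : {a | σ a ≠ a} ⊆ s)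
    (hf : ∀ k ∈ s, f (σ k) = -f k) : ∑ k ∈ s, f k = 0 := by
  rw [← self_eq_neg, ← Finset.sum_neg_distrib, ← σ.sum_comp s f hs]
  exact Finset.sum_congr rfl hf

theorem vortexF_eq_zero_of_perm {ι : Type*} [Fintype ι] [DecidableEq ι] (lam : ι → ℝ)
    (x : ι → E3) (j : ι) (σ : Equiv.Perm ι) (hσ : σ j = j) (hlam : ∀ k, lam (σ k) = lam k)
    (hinner : ∀ k, inner ℝ (x j) (x (σ k)) = inner ℝ (x j) (x k))
    (hcross : ∀ k, cross (x (σ k)) (x j) = -cross (x k) (x j)) :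
    vortexF lam x j = 0 := by
  have : IsAddTorsionFree E3 := .of_module_rat _
  refine Finset.sum_eq_zero_of_perm_neg σ _ _ (fun k hk => ?_) fun k _ => ?_
  · exact Finset.mem_erase.2 ⟨fun hkj => hk (hkj ▸ hσ), Finset.mem_univ k⟩
  · rw [hlam, hinner, hcross, smul_neg]

open Fin.CommRing in
theorem Fin.val_add_sub_modEq {n : ℕ} [NeZero n] (a b c : Fin n) :
    ((a + b - c : Fin n) : ℤ) ≡ a + b - c [ZMOD n] := by
  rw [← CharP.intCast_eq_intCast (Fin n) n]
  push_cast
  rfl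

theorem neg_one_pow_eq_of_modEq_two_mul_sub {R : Type*} [Ring R] {N a b c : ℕ}
    (h : (a : ℤ) ≡ 2 * c - b [ZMOD (2 * N : ℕ)]) : (-1 : R) ^ a = (-1) ^ b := by
  have h2 : (a : ℤ) ≡ b [ZMOD 2] :=
    (h.of_mul_right N).trans (Int.modEq_iff_dvd.2 ⟨c - b, by ring⟩).symm
  rw [neg_one_pow_eq_pow_mod_two, Int.natCast_modEq_iff.1 h2, ← neg_one_pow_eq_pow_mod_two]

def equatorPoint (θ : ℝ) : E3 := WithLp.toLp 2 ![cos θ, sin θ, 0]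

theorem equatorPoint_periodic : Function.Periodic equatorPoint (2 * π) := by
  intro θ
  simp [equatorPoint]

theorem inner_equatorPoint (θ φ : ℝ) :
    inner ℝ (equatorPoint θ) (equatorPoint φ) = cos (θ - φ) := by
  simp [equatorPoint, PiLp.inner_apply, Fin.sum_univ_three, cos_sub]
  ring

theorem cross_equatorPoint (θ φ : ℝ) :
    cross (equatorPoint φ) (equatorPoint θ) = sin (θ - φ) • EuclideanSpace.single 2 1 := by
  ext i
  fin_cases i <;> simp [cross, equatorPoint, sin_sub, mul_comm]

theorem inner_equatorPoint_reflect (a θ : ℝ) :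
    inner ℝ (equatorPoint a) (equatorPoint (2 * a - θ)) =
      inner ℝ (equatorPoint a) (equatorPoint θ) := by
  rw [inner_equatorPoint, inner_equatorPoint, ← cos_neg]
  congr 1
  ring

theorem cross_equatorPoint_reflect (a θ : ℝ) :
    cross (equatorPoint (2 * a - θ)) (equatorPoint a) =
      -cross (equatorPoint θ) (equatorPoint a) := by
  rw [cross_equatorPoint, cross_equatorPoint, ← neg_smul, ← sin_neg]
  congr 2
  ring

theorem equatorPoint_eq_of_modEq {N : ℕ} (hN : N ≠ 0) {a b : ℤ}
    (h : a ≡ b [ZMOD (2 * N : ℕ)]) : equatorPoint (a * π / N) = equatorPoint (b * π / N) := by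
  obtain ⟨m, hm⟩ := h.dvd
  have hm' : (b : ℝ) - a = 2 * N * m := by exact_mod_cast hm
  have hangle : (a : ℝ) * π / N = b * π / N + (-m : ℤ) * (2 * π) := by
    field_simp
    push_cast
    linear_combination -hm'
  rw [hangle, equatorPoint_periodic.int_mul (-m)]

theorem alternating_equatorial_ring_equilibrium_general {N : ℕ}
    (x : Fin (2 * N) → E3) (lam : Fin (2 * N) → ℝ)
    (hx : ∀ j, x j = ![Real.cos ((j : ℕ) * Real.pi / N),
                       Real.sin ((j : ℕ) * Real.pi / N), 0])
    (hlam : ∀ j, lam j = (-1 : ℝ) ^ (j : ℕ)) :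
    ∀ j, vortexF lam x j = 0 := by
  intro j
  have : NeZero (2 * N) := ⟨j.pos.ne'⟩
  have hN : N ≠ 0 := by have := j.pos; omega
  have hxθ (k : Fin (2 * N)) : x k = equatorPoint ((k : ℕ) * π / N) :=
    (WithLp.ext_iff 2).2 (hx k)
  have hreflect (k : Fin (2 * N)) :
      x (j + j - k) = equatorPoint (2 * ((j : ℕ) * π / N) - (k : ℕ) * π / N) := by
    have := equatorPoint_eq_of_modEq hN (Fin.val_add_sub_modEq j j k)
    push_cast at this
    rw [hxθ, this]
    ring_nf
  refine vortexF_eq_zero_of_perm lam x j (Equiv.subLeft (j + j)) (add_sub_cancel_right j j)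
    (fun k => ?_) (fun k => ?_) (fun k => ?_)
  · rw [hlam, hlam]
    refine neg_one_pow_eq_of_modEq_two_mul_sub (N := N) (c := j) ?_
    simpa [two_mul] using Fin.val_add_sub_modEq j j k
  · rw [Equiv.subLeft_apply, hreflect, hxθ, hxθ, inner_equatorPoint_reflect]
  · rw [Equiv.subLeft_apply, hreflect, hxθ, hxθ, cross_equatorPoint_reflect]

/-- The equatorial ring of `2N` vortices with alternating vorticities `±1`
(the configuration `D_{2Nh}(R_e)`) is an equilibrium of the spherical vortex system. -/
theorem alternating_equatorial_ring_equilibrium {N : ℕ} (hN : 1 ≤ N)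
    (x : Fin (2 * N) → E3) (lam : Fin (2 * N) → ℝ)
    (hx : ∀ j, x j = ![Real.cos ((j : ℕ) * Real.pi / N),
                       Real.sin ((j : ℕ) * Real.pi / N), 0])
    (hlam : ∀ j, lam j = (-1 : ℝ) ^ (j : ℕ)) :
    ∀ j, vortexF lam x j = 0 :=
  alternating_equatorial_ring_equilibrium_general x lam hx hlam
end
end

section
/- Place eight vortices at the vertices of the cube inscribed in the unit sphere, i.e. at the points v = (ε₁, ε₂, ε₃)/√3 with ε₁, ε₂, ε₃ ∈ {−1, +1}, and give the vertex v the vorticity λ_v = ε₁ε₂ε₃ (so the four vertices of one regular tetrahedron carry vorticity +1 and the four vertices of the dual tetrahedron carry vorticity −1). Then this configuration is an equilibrium of the spherical vortex system: at each vertex v, Σ_{w≠v} λ_w (w × v)/(1 − ⟨v, w⟩) = 0. -/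
/-!
Since `cross` is linear in its first argument and `cross v v = 0`, the field at `x i` is
`(∑ j, λ_j / (1 - ⟪x i, x j⟫) • x j) × x i`, so a vertex is in equilibrium as soon as this weighted
sum is a multiple of `x i`. On the cube the weight of `x δ` only depends on how many signs `δ`
shares with `ε`, and each of the three classes of other vertices sums to `±x ε`.
-/

noncomputable section

open Matrix RealInnerProductSpace

theorem cross_eq_toLp_crossProduct (u v : E3) :
    cross u v = WithLp.toLp 2 (WithLp.ofLp u ⨯₃ WithLp.ofLp v) := rfl

theorem cross_smul_self (c : ℝ) (u : E3) : cross (c • u) u = 0 := by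
  rw [cross_eq_toLp_crossProduct, WithLp.ofLp_smul, map_smul, LinearMap.smul_apply, cross_self,
    smul_zero, WithLp.toLp_zero]

theorem cross_self_eq_zero (u : E3) : cross u u = 0 := by
  simpa using cross_smul_self 1 u

theorem cross_sum_smul_left {ι : Type*} (s : Finset ι) (c : ι → ℝ) (u : ι → E3) (v : E3) :
    cross (∑ j ∈ s, c j • u j) v = ∑ j ∈ s, c j • cross (u j) v := by
  simp only [cross_eq_toLp_crossProduct, WithLp.ofLp_sum, WithLp.ofLp_smul, map_sum, map_smul,
    LinearMap.sum_apply, LinearMap.smul_apply, WithLp.toLp_sum, WithLp.toLp_smul]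

theorem vortexF_eq_cross_sum {ι : Type*} [Fintype ι] [DecidableEq ι] (lam : ι → ℝ) (x : ι → E3)
    (i : ι) : vortexF lam x i = cross (∑ j, (lam j / (1 - ⟪x i, x j⟫)) • x j) (x i) := by
  rw [vortexF, Finset.sum_erase _ (by rw [cross_self_eq_zero, smul_zero]),
    cross_sum_smul_left]

theorem vortexF_eq_zero_of_sum_eq_smul {ι : Type*} [Fintype ι] [DecidableEq ι] {lam : ι → ℝ}
    {x : ι → E3} {i : ι} {c : ℝ} (h : ∑ j, (lam j / (1 - ⟪x i, x j⟫)) • x j = c • x i) :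
    vortexF lam x i = 0 := by
  rw [vortexF_eq_cross_sum, h, cross_smul_self]

def cubeSign : Fin 2 → ℝ := ![1, -1]

def cubeVertex (ε : Fin 2 × Fin 2 × Fin 2) : E3 :=
  !₂[cubeSign ε.1 / √3, cubeSign ε.2.1 / √3, cubeSign ε.2.2 / √3]

def cubeVorticity (ε : Fin 2 × Fin 2 × Fin 2) : ℝ := cubeSign ε.1 * cubeSign ε.2.1 * cubeSign ε.2.2

theorem inner_cubeVertex (ε δ : Fin 2 × Fin 2 × Fin 2) :
    ⟪cubeVertex ε, cubeVertex δ⟫ =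
      (cubeSign ε.1 * cubeSign δ.1 + cubeSign ε.2.1 * cubeSign δ.2.1
        + cubeSign ε.2.2 * cubeSign δ.2.2) / 3 := by
  simp only [cubeVertex, PiLp.inner_apply, RCLike.inner_apply, Real.ringHom_apply,
    Fin.sum_univ_three, cons_val_zero, cons_val_one, cons_val]
  field_simp
  rw [Real.sq_sqrt (by norm_num)]
  ring

/-- The neighbours of `ε` carry weight `-3/2 · λ_ε` and sum to `x ε`, the face-diagonal vertices
carry `3/4 · λ_ε` and sum to `-x ε`, and the antipode carries `-1/2 · λ_ε`; the `δ = ε` term has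
weight `λ_ε / 0 = 0`. -/
theorem cube_sum_eq_smul (ε : Fin 2 × Fin 2 × Fin 2) :
    ∑ δ, (cubeVorticity δ / (1 - ⟪cubeVertex ε, cubeVertex δ⟫)) • cubeVertex δ
      = (-(7 / 4) * cubeVorticity ε) • cubeVertex ε := by
  ext k
  simp only [inner_cubeVertex, Fintype.sum_prod_type, Fin.sum_univ_two, WithLp.ofLp_smul,
    Pi.smul_apply, smul_eq_mul]
  fin_cases ε <;> fin_cases k <;> simp [cubeVertex, cubeVorticity, cubeSign] <;> ring

/-- The cube of alternating vortices (a regular tetrahedron of vortices `+1` together with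
its dual tetrahedron of vortices `-1`, the configuration `(𝕋ₕ, 𝕋)(v̂)`) is an equilibrium
of the spherical vortex system. -/
theorem cube_alternating_equilibrium
    (sgn : Fin 2 → ℝ) (hsgn : sgn = ![1, -1])
    (x : Fin 2 × Fin 2 × Fin 2 → E3) (lam : Fin 2 × Fin 2 × Fin 2 → ℝ)
    (hx : ∀ ε, x ε = ![sgn ε.1 / Real.sqrt 3, sgn ε.2.1 / Real.sqrt 3,
                       sgn ε.2.2 / Real.sqrt 3])
    (hlam : ∀ ε, lam ε = sgn ε.1 * sgn ε.2.1 * sgn ε.2.2) :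
    ∀ ε, vortexF lam x ε = 0 := by
  subst hsgn
  obtain rfl : x = cubeVertex := funext fun ε => WithLp.ofLp_injective 2 (hx ε)
  obtain rfl : lam = cubeVorticity := funext hlam
  exact fun ε => vortexF_eq_zero_of_sum_eq_smul (cube_sum_eq_smul ε)
end
end
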